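/- arXiv:1309.7192 — 4 statements merged into one kernel-verified Lean document; each statement's English description precedes it below -/
import Mathlib

section
/- Let K be an algebraically closed field of characteristic 0, let n ≥ 1, let V be an (n+2)-dimensional K-vector space, let q : V → K be a nondegenerate quadratic form with polar bilinear form B(u,v) = q(u+v) − q(u) − q(v), let φ : V → K be a nonzero linear functional, and let p ∈ V be the unique vector with B(p,·) = φ. Assume q(p) ≠ 0. Set Z = {v ∈ V : q(v) = 0 and φ(v) = 0} and let G be the set of linear automorphisms g of V such that g maps {v ∈ V : q(v) = 0} onto itself and maps Z onto itself. Then for every o ∈ V with q(o) ≠ 0, the following are equivalent: (i) for every g ∈ G there is t ∈ K with g(o) = t·o; (ii) o = t·p for some nonzero t ∈ K. -/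
open QuadraticMap Module

section Aux
set_option linter.unusedSectionVars false
variable {K : Type*} [Field K] [CharZero K]
variable {V : Type*} [AddCommGroup V] [Module K V]

lemma qexpand (q : QuadraticForm K V) (x y : V) :
    q (x + y) = q x + q y + polar q x y := by
  simp [QuadraticMap.polar]

lemma polar_self' (q : QuadraticForm K V) (x : V) : polar q x x = 2 * q x := by
  rw [QuadraticMap.polar_self]; push_cast [two_smul]; ring

lemma qsmul (q : QuadraticForm K V) (a : K) (x : V) : q (a • x) = a * a * q x := by
  rw [QuadraticMap.map_smul]; simp [smul_eq_mul]

lemma polar_smul_right' (q : QuadraticForm K V) (a : K) (x y : V) :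
    polar q x (a • y) = a * polar q x y := by
  rw [QuadraticMap.polar_smul_right]; simp [smul_eq_mul]

lemma polar_smul_left' (q : QuadraticForm K V) (a : K) (x y : V) :
    polar q (a • x) y = a * polar q x y := by
  rw [QuadraticMap.polar_smul_left]; simp [smul_eq_mul]

/-- expansion of `q (x + t•u + r•w)` -/
lemma expand3 (q : QuadraticForm K V) (x u w : V) (t r : K) :
    q (x + t • u + r • w) =
      q x + t * t * q u + r * r * q w
        + t * polar q x u + r * polar q x w + t * r * polar q u w := by
  rw [qexpand, qexpand, qsmul, qsmul, polar_smul_right', QuadraticMap.polar_add_left,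
    polar_smul_right', polar_smul_left', polar_smul_right']
  ring

end Aux

section Aux2
set_option linter.unusedSectionVars false
variable {K : Type*} [Field K] [CharZero K]
variable {V : Type*} [AddCommGroup V] [Module K V]

/-- If `q1` vanishes on the zero set of `q`, and `q` has a hyperbolic pair spanning
(together with its orthogonal complement) the space, then `q1` is proportional to `q`. -/
lemma prop_of_zeroes (q q1 : QuadraticForm K V) (u w : V)
    (hu : q u = 0) (hw : q w = 0) (huw : polar q u w = 1)
    (h0 : ∀ v, q v = 0 → q1 v = 0) (v : V) :
    q1 v = polar q1 u w * q v := by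
  set c := polar q1 u w with hc
  have hq1u : q1 u = 0 := h0 u hu
  have hq1w : q1 w = 0 := h0 w hw
  have key : ∀ x : V, polar q x u = 0 → polar q x w = 0 →
      q1 x = c * q x ∧ polar q1 x u = 0 ∧ polar q1 x w = 0 := by
    intro x hxu hxw
    set α := polar q1 x u with hα
    set β := polar q1 x w with hβ
    have main : ∀ t r : K, t * r = -q x →
        (q1 x - c * q x) + t * α + r * β = 0 := by
      intro t r htr
      have hz : q (x + t • u + r • w) = 0 := by
        rw [expand3, hu, hw, hxu, hxw, huw]; linear_combination htr
      have h1 := h0 _ hz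
      rw [expand3, hq1u, hq1w, ← hα, ← hβ, ← hc] at h1
      linear_combination h1 - c * htr
    by_cases hx : q x = 0
    · have h10 := main 1 0 (by simp [hx])
      have h01 := main 0 1 (by simp [hx])
      have h00 := main 0 0 (by simp [hx])
      refine ⟨by linear_combination h00, by linear_combination h10 - h00,
        by linear_combination h01 - h00⟩
    · have e1 := main 1 (-q x) (by ring)
      have e2 := main (-1) (q x) (by ring)
      have e3 := main 2 (-q x / 2) (by ring)
      have hd : q1 x - c * q x = 0 := by linear_combination (e1 + e2) / 2
      have h3 : 3 * (q x * β) = 0 := by linear_combination e2 + 2 * e3 - 3 * e1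
      have hβ0 : β = 0 := by
        rcases mul_eq_zero.mp h3 with h | h
        · exact absurd h (by norm_num)
        · exact (mul_eq_zero.mp h).resolve_left hx
      have hα0 : α = 0 := by
        have := e1
        rw [hβ0] at this
        linear_combination this - hd
      exact ⟨by linear_combination hd, hα0, hβ0⟩
  set a := polar q v w with ha
  set b := polar q v u with hb
  set x := v - a • u - b • w with hx
  have hvx : v = x + a • u + b • w := by rw [hx]; abel
  have hwu : polar q w u = 1 := by rw [QuadraticMap.polar_comm]; exact huw
  have hxu : polar q x u = 0 := by
    rw [hx, QuadraticMap.polar_sub_left, QuadraticMap.polar_sub_left,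
      polar_smul_left', polar_smul_left', polar_self', hwu, hu, ← hb]
    ring
  have hxw : polar q x w = 0 := by
    rw [hx, QuadraticMap.polar_sub_left, QuadraticMap.polar_sub_left,
      polar_smul_left', polar_smul_left', polar_self', huw, hw, ← ha]
    ring
  obtain ⟨k1, k2, k3⟩ := key x hxu hxw
  have hqv : q v = q x + a * b := by
    rw [hvx, expand3, hu, hw, hxu, hxw, huw]; ring
  have hq1v : q1 v = q1 x + a * b * c := by
    rw [hvx, expand3, hq1u, hq1w, k2, k3, ← hc]; ring
  rw [hq1v, hqv, k1]; ring

end Aux2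

section Aux3
set_option linter.unusedSectionVars false
variable {K : Type*} [Field K] [CharZero K]
variable {V : Type*} [AddCommGroup V] [Module K V]

lemma image_eq_of_invol {f : V → V} (hf : ∀ v, f (f v) = v) {S : Set V}
    (h : ∀ v ∈ S, f v ∈ S) : f '' S = S := by
  ext v
  constructor
  · rintro ⟨a, ha, rfl⟩; exact h a ha
  · intro hv; exact ⟨f v, h v hv, hf v⟩

/-- The reflection in the hyperplane orthogonal to `w`. -/
noncomputable def reflMap (q : QuadraticForm K V) (w : V) : V →ₗ[K] V :=
  LinearMap.id - (((q w)⁻¹ • ((polarBilin q).flip w)).smulRight w)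

lemma reflMap_apply (q : QuadraticForm K V) (w v : V) :
    reflMap q w v = v - ((q w)⁻¹ * polar q v w) • w := by
  simp [reflMap, LinearMap.smulRight_apply, LinearMap.smul_apply, LinearMap.flip_apply,
    smul_eq_mul, mul_smul, QuadraticMap.polarBilin_apply_apply]

lemma reflMap_invol (q : QuadraticForm K V) (w : V) (hw : q w ≠ 0) (v : V) :
    reflMap q w (reflMap q w v) = v := by
  rw [reflMap_apply, reflMap_apply]
  have h1 : polar q (v - ((q w)⁻¹ * polar q v w) • w) w = - polar q v w := by
    rw [QuadraticMap.polar_sub_left, polar_smul_left', polar_self']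
    field_simp
    ring
  rw [h1]
  have h2 : (q w)⁻¹ * -polar (⇑q) v w = -((q w)⁻¹ * polar (⇑q) v w) := by ring
  rw [h2, neg_smul, sub_neg_eq_add, sub_add_cancel]

lemma reflMap_q (q : QuadraticForm K V) (w : V) (hw : q w ≠ 0) (v : V) :
    q (reflMap q w v) = q v := by
  rw [reflMap_apply, sub_eq_add_neg, ← neg_smul, qexpand, qsmul, polar_smul_right']
  field_simp
  ring

/-- The reflection as a linear equivalence. -/
noncomputable def reflEquiv (q : QuadraticForm K V) (w : V) (hw : q w ≠ 0) : V ≃ₗ[K] V :=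
  LinearEquiv.ofLinear (reflMap q w) (reflMap q w)
    (LinearMap.ext (reflMap_invol q w hw)) (LinearMap.ext (reflMap_invol q w hw))

lemma reflEquiv_apply (q : QuadraticForm K V) (w : V) (hw : q w ≠ 0) (v : V) :
    reflEquiv q w hw v = v - ((q w)⁻¹ * polar q v w) • w := reflMap_apply q w v

lemma exists_isotropic [IsAlgClosed K] [FiniteDimensional K V] (q : QuadraticForm K V)
    (hq : (polarBilin q).Nondegenerate) (hdim : 2 ≤ Module.finrank K V) :
    ∃ u : V, u ≠ 0 ∧ q u = 0 := by
  haveI : Invertible (2 : K) := invertibleOfNonzero two_ne_zero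
  have hsymm : (polarBilin q).IsSymm := ⟨fun x y => by
    simp [QuadraticMap.polarBilin_apply_apply, QuadraticMap.polar_comm]⟩
  obtain ⟨b, hb⟩ := LinearMap.BilinForm.exists_orthogonal_basis hsymm
  have hbq : ∀ i, q (b i) ≠ 0 := by
    intro i h
    have h0 : polarBilin q (b i) = 0 := by
      apply b.ext
      intro j
      by_cases hij : i = j
      · subst hij
        simp [QuadraticMap.polarBilin_apply_apply, polar_self', h]
      · simp only [LinearMap.zero_apply]; exact hb hij
    exact b.ne_zero i (hq.1 _ (fun n => by rw [h0]; rfl))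
  set i0 : Fin (Module.finrank K V) := ⟨0, by omega⟩ with hi0
  set i1 : Fin (Module.finrank K V) := ⟨1, by omega⟩ with hi1
  have hne : i0 ≠ i1 := by simp [hi0, hi1, Fin.ext_iff]
  obtain ⟨s, hs⟩ := IsAlgClosed.exists_pow_nat_eq (-(q (b i0)) / q (b i1)) (n := 2) (by norm_num)
  refine ⟨b i0 + s • b i1, ?_, ?_⟩
  · intro h
    have := congrArg (fun z => b.repr z i0) h
    simp only [map_add, LinearEquiv.map_smul, Basis.repr_self, map_zero, Finsupp.coe_add,
      Finsupp.coe_smul, Pi.add_apply, Pi.smul_apply, Finsupp.single_apply, Finsupp.coe_zero,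
      Pi.zero_apply] at this
    rw [if_neg (show ¬ i1 = i0 from fun hc => hne hc.symm)] at this
    simp at this
  · have hpol : polar q (b i0) (b i1) = 0 := hb hne
    rw [qexpand, qsmul, polar_smul_right', hpol]
    have : s * s = -(q (b i0)) / q (b i1) := by rw [← hs]; ring
    rw [this]
    field_simp [hbq i1]
    ring

lemma exists_hyperbolic [IsAlgClosed K] [FiniteDimensional K V] (q : QuadraticForm K V)
    (hq : (polarBilin q).Nondegenerate) (hdim : 2 ≤ Module.finrank K V) :
    ∃ u w : V, q u = 0 ∧ q w = 0 ∧ polar q u w = 1 := by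
  obtain ⟨u, hu0, hu⟩ := exists_isotropic q hq hdim
  have h1 : ¬∀ n, polarBilin q u n = 0 := fun h => hu0 (hq.1 u h)
  push_neg at h1
  obtain ⟨w0, hw0⟩ := h1
  rw [QuadraticMap.polarBilin_apply_apply] at hw0
  set B := polar q u w0 with hB
  set w1 := w0 - (q w0 / B) • u with hw1
  have hqw1 : q w1 = 0 := by
    rw [hw1, sub_eq_add_neg, ← neg_smul, qexpand, qsmul, polar_smul_right', hu,
      QuadraticMap.polar_comm q w0 u, ← hB]
    field_simp
    ring
  have hpw1 : polar q u w1 = B := by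
    rw [hw1, QuadraticMap.polar_sub_right, polar_smul_right', polar_self', hu]
    ring
  refine ⟨u, B⁻¹ • w1, hu, ?_, ?_⟩
  · rw [qsmul, hqw1]; ring
  · rw [polar_smul_right', hpw1]; field_simp

lemma mem_span_isotropic (q : QuadraticForm K V) (u w : V)
    (hu : q u = 0) (hw : q w = 0) (huw : polar q u w = 1) (x : V) :
    x ∈ Submodule.span K {v : V | q v = 0} := by
  set a := polar q x w with ha
  set b := polar q x u with hb
  set x' := x - a • u - b • w with hx'
  have hwu : polar q w u = 1 := by rw [QuadraticMap.polar_comm]; exact huw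
  have hxu : polar q x' u = 0 := by
    rw [hx', QuadraticMap.polar_sub_left, QuadraticMap.polar_sub_left,
      polar_smul_left', polar_smul_left', polar_self', hwu, hu, ← hb]
    ring
  have hxw : polar q x' w = 0 := by
    rw [hx', QuadraticMap.polar_sub_left, QuadraticMap.polar_sub_left,
      polar_smul_left', polar_smul_left', polar_self', huw, hw, ← ha]
    ring
  have hz : q (x' + (1:K) • u + (-q x') • w) = 0 := by
    rw [expand3, hu, hw, hxu, hxw, huw]; ring
  have hmem1 : x' + (1:K) • u + (-q x') • w ∈ Submodule.span K {v : V | q v = 0} :=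
    Submodule.subset_span hz
  have hmemu : u ∈ Submodule.span K {v : V | q v = 0} := Submodule.subset_span hu
  have hmemw : w ∈ Submodule.span K {v : V | q v = 0} := Submodule.subset_span hw
  have hxeq : x = (x' + (1:K) • u + (-q x') • w) + (a - 1) • u + (b + q x') • w := by
    rw [hx']
    module
  rw [hxeq]
  exact Submodule.add_mem _ (Submodule.add_mem _ hmem1 (Submodule.smul_mem _ _ hmemu))
    (Submodule.smul_mem _ _ hmemw)

end Aux3

lemma reflEquiv_coe {K : Type*} [Field K] [CharZero K] {V : Type*} [AddCommGroup V] [Module K V]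
    (q : QuadraticForm K V) (w : V) (hw : q w ≠ 0) :
    ⇑(reflEquiv q w hw) = ⇑(reflMap q w) := rfl

/-- Let `K` be an algebraically closed field of characteristic `0`,
`n ≥ 1`, `V` an `(n+2)`-dimensional `K`-vector space, `q` a nondegenerate quadratic
form on `V` with polar bilinear form `B(u,v) = q(u+v) - q(u) - q(v)`, `φ` a nonzero
linear functional, and `p` the unique vector with `B(p,·) = φ`; assume `q p ≠ 0`.
Set `Z = {v | q v = 0 ∧ φ v = 0}` and let `G` be the set of linear automorphisms of
`V` mapping `{q = 0}` onto itself and `Z` onto itself.  Then for every `o` with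
`q o ≠ 0`: (`[o]` is fixed by every element of `G`) ↔ (`o` is a nonzero scalar
multiple of `p`). -/
theorem apolar_point_is_unique_fixed_point
    {K : Type*} [Field K] [IsAlgClosed K] [CharZero K]
    {V : Type*} [AddCommGroup V] [Module K V] [FiniteDimensional K V]
    (n : ℕ) (hn : 1 ≤ n) (hdim : Module.finrank K V = n + 2)
    (q : QuadraticForm K V) (hq : (QuadraticMap.polarBilin q).Nondegenerate)
    (φ : V →ₗ[K] K) (hφ : φ ≠ 0)
    (p : V) (hp : ∀ v : V, QuadraticMap.polar q p v = φ v)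
    (hqp : q p ≠ 0) :
    ∀ o : V, q o ≠ 0 →
      ((∀ g : V ≃ₗ[K] V,
          (g '' {v : V | q v = 0} = {v : V | q v = 0}) →
          (g '' {v : V | q v = 0 ∧ φ v = 0} = {v : V | q v = 0 ∧ φ v = 0}) →
          ∃ t : K, g o = t • o)
        ↔ (∃ t : K, t ≠ 0 ∧ o = t • p)) := by
  have h2 : (2 : K) ≠ 0 := by norm_num
  have hφp : φ p = 2 * q p := by rw [← hp p, polar_self']
  have hφp0 : φ p ≠ 0 := by rw [hφp]; exact mul_ne_zero h2 hqp
  set W := LinearMap.ker φ with hW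
  have hWmem : ∀ v : V, v ∈ W ↔ φ v = 0 := fun v => LinearMap.mem_ker
  have hdecomp : ∀ v : V, v - (φ v / φ p) • p ∈ W := by
    intro v
    rw [hWmem, _root_.map_sub, _root_.map_smul, smul_eq_mul]
    field_simp
    ring
  -- the finrank of W is n + 1
  have hrW : Module.finrank K W = n + 1 := by
    have h1 := LinearMap.finrank_range_add_finrank_ker φ
    have hsurj : LinearMap.range φ = ⊤ := by
      rw [LinearMap.range_eq_top]
      intro c
      exact ⟨(c / φ p) • p, by rw [_root_.map_smul, smul_eq_mul]; field_simp⟩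
    rw [hsurj, hdim, finrank_top, Module.finrank_self, ← hW] at h1
    omega
  -- q restricted to W
  set qW : QuadraticForm K W := q.comp W.subtype with hqWdef
  have hpolW : ∀ x y : W, polar qW x y = polar q (x : V) (y : V) := by
    intro x y
    simp [QuadraticMap.polar, hqWdef, QuadraticMap.comp_apply]
  -- expansions of polar against the decomposition
  have hexp : ∀ x v : V, φ x = 0 → (∀ y : V, y ∈ W → polar q x y = 0) →
      polar q x v = 0 := by
    intro x v hφx hx
    have hv1 := hdecomp v
    have e1 : polar q x v
        = polar q x (v - (φ v / φ p) • p) + (φ v / φ p) * polar q x p := by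
      conv_lhs => rw [show v = (v - (φ v / φ p) • p) + (φ v / φ p) • p by abel]
      rw [QuadraticMap.polar_add_right, polar_smul_right']
    have e2 : polar q x p = 0 := by
      rw [QuadraticMap.polar_comm, hp x, hφx]
    rw [e1, e2, hx _ hv1]
    ring
  have hqW : (QuadraticMap.polarBilin qW).Nondegenerate := by
    have key : ∀ x : W, (∀ y : W, polar q (x : V) (y : V) = 0) → x = 0 := by
      intro x hx
      have hφx : φ (x : V) = 0 := (hWmem _).1 x.2
      have hall : ∀ v : V, polar q (x : V) v = 0 := by
        intro v
        exact hexp _ v hφx (fun y hy => hx ⟨y, hy⟩)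
      have hx0 : (x : V) = 0 := hq.1 _ (fun m => by
        rw [QuadraticMap.polarBilin_apply_apply]; exact hall m)
      exact Subtype.ext hx0
    constructor
    · intro x hx
      exact key x (fun y => by
        have := hx y
        rwa [QuadraticMap.polarBilin_apply_apply, hpolW] at this)
    · intro y hy
      refine key y (fun z => ?_)
      have := hy z
      rw [QuadraticMap.polarBilin_apply_apply, hpolW] at this
      rwa [QuadraticMap.polar_comm]
  -- the isotropic cone of W spans W
  have spanZ : Submodule.span K {v : V | q v = 0 ∧ φ v = 0} = W := by
    apply le_antisymm
    · rw [Submodule.span_le]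
      intro v hv
      exact (hWmem v).2 hv.2
    · intro x hx
      obtain ⟨u, w, huq, hwq, huw⟩ :=
        exists_hyperbolic qW hqW (by rw [hrW]; omega)
      have hm : (⟨x, hx⟩ : W) ∈ Submodule.span K {y : W | qW y = 0} :=
        mem_span_isotropic qW u w huq hwq huw _
      have hm2 : x ∈ Submodule.map W.subtype
          (Submodule.span K {y : W | qW y = 0}) := ⟨_, hm, rfl⟩
      rw [Submodule.map_span] at hm2
      refine Submodule.span_mono ?_ hm2
      rintro _ ⟨y, hy, rfl⟩
      exact ⟨by simpa [hqWdef, QuadraticMap.comp_apply] using hy, (hWmem _).1 y.2⟩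
  intro o ho
  have ho0 : o ≠ 0 := fun h => ho (by rw [h]; exact map_zero q)
  constructor
  · -- fixed by all of G → multiple of p
    intro H
    by_cases hop : ∃ s : K, o = s • p
    · obtain ⟨s, rfl⟩ := hop
      refine ⟨s, fun h0 => ?_, rfl⟩
      rw [h0, zero_smul] at ho0
      exact ho0 rfl
    · exfalso
      -- Step 1: the reflection in p shows φ o = 0
      have hφσ : ∀ v, φ (reflMap q p v) = - φ v := by
        intro v
        rw [reflMap_apply, _root_.map_sub, _root_.map_smul, smul_eq_mul]
        have h1 : polar q v p = φ v := by rw [QuadraticMap.polar_comm]; exact hp v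
        rw [h1, hφp]
        field_simp
        ring
      have himg1 : (reflEquiv q p hqp) '' {v : V | q v = 0} = {v : V | q v = 0} := by
        rw [reflEquiv_coe]
        exact image_eq_of_invol (reflMap_invol q p hqp)
          (fun v hv => by show q (reflMap q p v) = 0; rw [reflMap_q q p hqp]; exact hv)
      have himg2 : (reflEquiv q p hqp) '' {v : V | q v = 0 ∧ φ v = 0}
          = {v : V | q v = 0 ∧ φ v = 0} := by
        rw [reflEquiv_coe]
        refine image_eq_of_invol (reflMap_invol q p hqp) (fun v hv => ?_)
        refine ⟨by rw [reflMap_q q p hqp]; exact hv.1, ?_⟩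
        rw [hφσ, hv.2, neg_zero]
      obtain ⟨t, ht⟩ := H (reflEquiv q p hqp) himg1 himg2
      rw [reflEquiv_coe, reflMap_apply] at ht
      have h1 : polar q o p = φ o := by rw [QuadraticMap.polar_comm]; exact hp o
      rw [h1] at ht
      have hφo : φ o = 0 := by
        by_contra hφo
        have hl0 : (q p)⁻¹ * φ o ≠ 0 := mul_ne_zero (inv_ne_zero hqp) hφo
        have he : ((q p)⁻¹ * φ o) • p = (1 - t) • o := by
          rw [sub_smul, one_smul, ← ht]
          abel
        have h1t : (1 : K) - t ≠ 0 := by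
          intro h
          rw [h, zero_smul] at he
          rcases smul_eq_zero.mp he with hc | hc
          · exact hl0 hc
          · exact hφp0 (by rw [hc, map_zero])
        set d := ((q p)⁻¹ * φ o)⁻¹ * (1 - t) with hd
        have hd0 : d ≠ 0 := mul_ne_zero (inv_ne_zero hl0) h1t
        have hp' : p = d • o := by
          rw [hd, mul_smul, ← he, ← mul_smul, inv_mul_cancel₀ hl0, one_smul]
        exact hop ⟨d⁻¹, by rw [hp', ← mul_smul, inv_mul_cancel₀ hd0, one_smul]⟩
      -- Step 2: pick u ∈ W independent from o
      have hnot : ¬(W ≤ Submodule.span K {o}) := by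
        intro hle
        have hle2 := Submodule.finrank_mono hle
        rw [hrW, finrank_span_singleton ho0] at hle2
        omega
      rw [SetLike.le_def] at hnot
      push_neg at hnot
      obtain ⟨u, huW, huo⟩ := hnot
      -- Step 3: pick s avoiding the bad values
      set P1 : Polynomial K := Polynomial.C (q o) + Polynomial.C (polar q o u) * Polynomial.X
        + Polynomial.C (q u) * Polynomial.X ^ 2 with hP1def
      set P2 : Polynomial K := Polynomial.C (2 * q o) + Polynomial.C (polar q o u) * Polynomial.X
        with hP2def
      have hP1 : P1 ≠ 0 := by
        intro h
        apply ho
        have := congrArg (fun r => Polynomial.coeff r 0) h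
        simpa [hP1def, Polynomial.coeff_add] using this
      have hP2 : P2 ≠ 0 := by
        intro h
        apply ho
        have := congrArg (fun r => Polynomial.coeff r 0) h
        have h' : 2 * q o = 0 := by simpa [hP2def, Polynomial.coeff_add] using this
        rcases mul_eq_zero.mp h' with hc | hc
        · exact absurd hc h2
        · exact hc
      have hfin : ({s : K | P1.IsRoot s} ∪ {s : K | P2.IsRoot s} ∪ {(0 : K)}).Finite :=
        ((Polynomial.finite_setOf_isRoot hP1).union
          (Polynomial.finite_setOf_isRoot hP2)).union (Set.finite_singleton 0)
      obtain ⟨s, hs⟩ := hfin.infinite_compl.nonempty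
      simp only [Set.mem_compl_iff, Set.mem_union, Set.mem_singleton_iff, not_or] at hs
      obtain ⟨⟨hs1, hs2⟩, hs0⟩ := hs
      set w := o + s • u with hwdef
      have hqw : q w ≠ 0 := by
        rw [hwdef, qexpand, qsmul, polar_smul_right']
        intro h
        apply hs1
        show P1.eval s = 0
        rw [hP1def]
        simp only [Polynomial.eval_add, Polynomial.eval_mul, Polynomial.eval_C,
          Polynomial.eval_X, Polynomial.eval_pow]
        linear_combination h
      have hpow : polar q o w ≠ 0 := by
        rw [hwdef, QuadraticMap.polar_add_right, polar_smul_right', polar_self']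
        intro h
        apply hs2
        show P2.eval s = 0
        rw [hP2def]
        simp only [Polynomial.eval_add, Polynomial.eval_mul, Polynomial.eval_C,
          Polynomial.eval_X]
        linear_combination h
      have hφu : φ u = 0 := (hWmem u).1 huW
      have hφw : φ w = 0 := by
        rw [hwdef, map_add, _root_.map_smul, hφo, hφu, smul_eq_mul]
        ring
      -- Step 4: the reflection in w
      have hφτ : ∀ v, φ (reflMap q w v) = φ v := by
        intro v
        rw [reflMap_apply, _root_.map_sub, _root_.map_smul, smul_eq_mul, hφw]
        ring
      have himg1' : (reflEquiv q w hqw) '' {v : V | q v = 0} = {v : V | q v = 0} := by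
        rw [reflEquiv_coe]
        exact image_eq_of_invol (reflMap_invol q w hqw)
          (fun v hv => by show q (reflMap q w v) = 0; rw [reflMap_q q w hqw]; exact hv)
      have himg2' : (reflEquiv q w hqw) '' {v : V | q v = 0 ∧ φ v = 0}
          = {v : V | q v = 0 ∧ φ v = 0} := by
        rw [reflEquiv_coe]
        refine image_eq_of_invol (reflMap_invol q w hqw) (fun v hv => ?_)
        exact ⟨by rw [reflMap_q q w hqw]; exact hv.1, by rw [hφτ]; exact hv.2⟩
      obtain ⟨t, ht⟩ := H (reflEquiv q w hqw) himg1' himg2'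
      rw [reflEquiv_coe, reflMap_apply] at ht
      set μ := (q w)⁻¹ * polar q o w with hμ
      have hμ0 : μ ≠ 0 := mul_ne_zero (inv_ne_zero hqw) hpow
      have he : μ • w = (1 - t) • o := by
        rw [sub_smul, one_smul, ← ht]
        abel
      have hwspan : w ∈ Submodule.span K {o} := by
        have : w = (μ⁻¹ * (1 - t)) • o := by
          rw [mul_smul, ← he, ← mul_smul, inv_mul_cancel₀ hμ0, one_smul]
        rw [this]
        exact Submodule.smul_mem _ _ (Submodule.mem_span_singleton_self o)
      apply huo
      have hsu : s • u = w - o := by rw [hwdef]; abel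
      have : u = s⁻¹ • (s • u) := by rw [← mul_smul, inv_mul_cancel₀ hs0, one_smul]
      rw [this, hsu]
      exact Submodule.smul_mem _ _
        (Submodule.sub_mem _ hwspan (Submodule.mem_span_singleton_self o))
  · -- multiple of p → fixed by all of G
    rintro ⟨t, ht, rfl⟩ g hg1 hg2
    have hg1' : ∀ v, q v = 0 → q (g v) = 0 := by
      intro v hv
      have : g v ∈ g '' {v : V | q v = 0} := ⟨v, hv, rfl⟩
      rw [hg1] at this
      exact this
    obtain ⟨u, w, hu, hw, huw⟩ := exists_hyperbolic q hq (by rw [hdim]; omega)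
    set q1 : QuadraticForm K V := q.comp (g : V →ₗ[K] V) with hq1def
    have hq1app : ∀ v, q1 v = q (g v) := fun v => rfl
    set c := polar q1 u w with hc
    have hprop : ∀ v, q (g v) = c * q v := by
      intro v
      rw [← hq1app]
      exact prop_of_zeroes q q1 u w hu hw huw (fun v hv => by
        rw [hq1app]; exact hg1' v hv) v
    have hc0 : c ≠ 0 := by
      intro h
      apply hqp
      have hz : g p ∈ {v : V | q v = 0} := by
        show q (g p) = 0
        rw [hprop, h, zero_mul]
      rw [← hg1] at hz
      obtain ⟨a, ha, hag⟩ := hz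
      have : a = p := g.injective hag
      rw [← this]
      exact ha
    have hpolg : ∀ x y, polar q (g x) (g y) = c * polar q x y := by
      intro x y
      simp only [QuadraticMap.polar]
      rw [← map_add g, hprop, hprop, hprop]
      ring
    have hmap : Submodule.map (g : V →ₗ[K] V) W = W := by
      rw [← spanZ, Submodule.map_span]
      rw [show ⇑(g : V →ₗ[K] V) = ⇑g from rfl, hg2]
    set μ := polar q (g p) p / (2 * q p) with hμ
    have hzero : ∀ v : V, polar q (g p - μ • p) v = 0 := by
      intro v
      have hv1 := hdecomp v
      obtain ⟨x', hx'W, hgx'⟩ : ∃ x' ∈ W, g x' = v - (φ v / φ p) • p := by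
        rw [← hmap] at hv1
        obtain ⟨x', hx', he⟩ := hv1
        exact ⟨x', hx', he⟩
      have hyx : polar q (g p) (v - (φ v / φ p) • p) = 0 := by
        rw [← hgx', hpolg, hp, (hWmem x').1 hx'W]
        ring
      have e1 : polar q (g p) v
          = polar q (g p) (v - (φ v / φ p) • p) + (φ v / φ p) * polar q (g p) p := by
        conv_lhs => rw [show v = (v - (φ v / φ p) • p) + (φ v / φ p) • p by abel]
        rw [QuadraticMap.polar_add_right, polar_smul_right']
      have e2 : polar q p v = (φ v / φ p) * (2 * q p) := by
        conv_lhs => rw [show v = (v - (φ v / φ p) • p) + (φ v / φ p) • p by abel]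
        rw [QuadraticMap.polar_add_right, polar_smul_right', hp, hp,
          (hWmem _).1 hv1, ← hφp, hφp]
        ring
      have hyp2 : polar q (g p) p = μ * (2 * q p) := by
        rw [hμ]
        field_simp
      rw [QuadraticMap.polar_sub_left, polar_smul_left', e1, e2, hyx, hyp2]
      ring
    have hgp : g p = μ • p := by
      have h0 := hq.1 (g p - μ • p) (fun m => by
        rw [QuadraticMap.polarBilin_apply_apply]; exact hzero m)
      rwa [sub_eq_zero] at h0
    exact ⟨μ, by rw [_root_.map_smul, hgp, smul_comm]⟩
end

section
/- Let K be an algebraically closed field of characteristic 0, n ≥ 1, V an (n+2)-dimensional K-vector space, q : V → K a nondegenerate quadratic form with polar bilinear form B(u,v) = q(u+v) − q(u) − q(v), φ : V → K a nonzero linear functional, and p ∈ V the unique vector with B(p,·) = φ; assume q(p) ≠ 0. Then for any two nonzero vectors z, z' ∈ V with q(z) = q(z') = 0 and φ(z) = φ(z') = 0, there exist a linear automorphism g of V and scalars c, d, t ∈ K \ {0} such that q(g(v)) = c·q(v) and φ(g(v)) = d·φ(v) for all v ∈ V, and g(z) = t·z'. -/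
set_option linter.unusedSectionVars false

open QuadraticMap

section Refl

variable {K : Type*} [Field K] [CharZero K]
  {V : Type*} [AddCommGroup V] [Module K V] (q : QuadraticForm K V)

/-- Reflection in a vector `u` of nonzero norm. -/
noncomputable def qreflMap (u : V) : V →ₗ[K] V where
  toFun x := x - ((q u)⁻¹ * polar q x u) • u
  map_add' x y := by
    simp only [polar_add_left, mul_add, add_smul]
    abel
  map_smul' a x := by
    simp only [polar_smul_left, smul_eq_mul, RingHom.id_apply, smul_sub, smul_smul]
    ring_nf

theorem qreflMap_apply (u x : V) :
    qreflMap q u x = x - ((q u)⁻¹ * polar q x u) • u := rfl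

theorem qreflMap_invol {u : V} (hu : q u ≠ 0) (x : V) :
    qreflMap q u (qreflMap q u x) = x := by
  simp only [qreflMap_apply, polar_sub_left, polar_smul_left, polar_self,
    smul_eq_mul, two_smul]
  have h2 : (q u)⁻¹ * (polar q x u - (q u)⁻¹ * polar q x u * (q u + q u))
      = -((q u)⁻¹ * polar q x u) := by
    field_simp; ring
  rw [h2]
  simp

theorem q_qreflMap {u : V} (hu : q u ≠ 0) (x : V) :
    q (qreflMap q u x) = q x := by
  rw [qreflMap_apply, sub_eq_add_neg,
    QuadraticMap.map_add (⇑q) x (-(((q u)⁻¹ * polar q x u) • u)), ← neg_smul,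
    QuadraticMap.map_smul, polar_smul_right]
  have : polar q x u * (q u)⁻¹ = (q u)⁻¹ * polar q x u := mul_comm _ _
  field_simp
  have h : q u * (q u)⁻¹ = 1 := mul_inv_cancel₀ hu
  linear_combination (polar q x u ^ 2 * (q u)⁻¹) * h

theorem phi_qreflMap (φ : V →ₗ[K] K) {u : V} (hu : φ u = 0) (x : V) :
    φ (qreflMap q u x) = φ x := by
  rw [qreflMap_apply, _root_.map_sub, _root_.map_smul, hu, smul_eq_mul, mul_zero, sub_zero]

theorem q_sub (x y : V) : q (x - y) = q x + q y - polar q x y := by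
  rw [sub_eq_add_neg, QuadraticMap.map_add (⇑q) x (-y), QuadraticMap.map_neg,
    polar_neg_right]
  ring

theorem q_sub_ne_zero {z w : V} (hz : q z = 0) (hw : q w = 0)
    (hP : polar q z w ≠ 0) : q (z - w) ≠ 0 := by
  rw [q_sub, hz, hw]
  simpa using hP

theorem qreflMap_send {z w : V} (hz : q z = 0) (hw : q w = 0)
    (hP : polar q z w ≠ 0) : qreflMap q (z - w) z = w := by
  have hq1 : q (z - w) = -polar q z w := by rw [q_sub, hz, hw]; ring
  have hq2 : polar q z (z - w) = -polar q z w := by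
    rw [polar_sub_right, polar_self, hz]
    simp
  rw [qreflMap_apply, hq1, hq2]
  have : (-polar q z w)⁻¹ * -polar q z w = 1 := by
    field_simp
  rw [this, one_smul]
  abel

/-- Reflection as a linear equivalence. -/
noncomputable def qrefl (u : V) (hu : q u ≠ 0) : V ≃ₗ[K] V :=
  LinearEquiv.ofLinear (qreflMap q u) (qreflMap q u)
    (LinearMap.ext fun x => qreflMap_invol q hu x)
    (LinearMap.ext fun x => qreflMap_invol q hu x)

@[simp] theorem qrefl_apply (u : V) (hu : q u ≠ 0) (x : V) :
    qrefl q u hu x = qreflMap q u x := rfl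

end Refl



/-- With `K`, `V`, `q`, `φ`, `p` as before (`dim V = n + 2`,
`q p ≠ 0`), for any two nonzero vectors `z, z'` with `q z = q z' = 0` and
`φ z = φ z' = 0`, there exist a linear automorphism `g` of `V` and nonzero scalars
`c, d, t` such that `q (g v) = c * q v` and `φ (g v) = d * φ v` for all `v`, and
`g z = t • z'`. -/
theorem transitive_on_hyperplane_section
    {K : Type*} [Field K] [IsAlgClosed K] [CharZero K]
    {V : Type*} [AddCommGroup V] [Module K V] [FiniteDimensional K V]
    (n : ℕ) (hn : 1 ≤ n) (hdim : Module.finrank K V = n + 2)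
    (q : QuadraticForm K V) (hq : (QuadraticMap.polarBilin q).Nondegenerate)
    (φ : V →ₗ[K] K) (hφ : φ ≠ 0)
    (p : V) (hp : ∀ v : V, QuadraticMap.polar q p v = φ v)
    (hqp : q p ≠ 0)
    (z z' : V) (hz : z ≠ 0) (hz' : z' ≠ 0)
    (hqz : q z = 0) (hqz' : q z' = 0)
    (hφz : φ z = 0) (hφz' : φ z' = 0) :
    ∃ (g : V ≃ₗ[K] V) (c d t : K), c ≠ 0 ∧ d ≠ 0 ∧ t ≠ 0 ∧
      (∀ v : V, q (g v) = c * q v) ∧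
      (∀ v : V, φ (g v) = d * φ v) ∧
      g z = t • z' := by
  classical
  have hφp : φ p ≠ 0 := by
    rw [← hp p, polar_self, two_smul]
    intro h
    exact hqp (add_self_eq_zero.mp h)
  -- For any nonzero x in the hyperplane, there is a in the hyperplane with polar q x a ≠ 0
  have existA : ∀ x : V, x ≠ 0 → φ x = 0 → ∃ a, φ a = 0 ∧ polar q x a ≠ 0 := by
    intro x hx hφx
    by_contra hcon
    push_neg at hcon
    apply hx
    apply hq.1 x
    intro y
    rw [polarBilin_apply_apply]
    have h1 : φ (y - (φ y / φ p) • p) = 0 := by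
      rw [_root_.map_sub, _root_.map_smul, smul_eq_mul, div_mul_cancel₀ _ hφp, sub_self]
    have h2 := hcon _ h1
    have h3 : polar (⇑q) x p = 0 := by rw [polar_comm, hp x, hφx]
    rw [polar_sub_right, polar_smul_right, h3, smul_zero, sub_zero] at h2
    exact h2
  by_cases hdep : ∃ s : K, z' = s • z
  · obtain ⟨s, rfl⟩ := hdep
    have hs : s ≠ 0 := by rintro rfl; simp at hz'
    refine ⟨LinearEquiv.refl K V, 1, 1, s⁻¹, one_ne_zero, one_ne_zero,
      inv_ne_zero hs, fun v => by simp, fun v => by simp, ?_⟩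
    simp [smul_smul, inv_mul_cancel₀ hs]
  · by_cases hP : polar (⇑q) z z' ≠ 0
    · have hu := q_sub_ne_zero q hqz hqz' hP
      refine ⟨qrefl q (z - z') hu, 1, 1, 1, one_ne_zero, one_ne_zero, one_ne_zero,
        fun v => ?_, fun v => ?_, ?_⟩
      · rw [qrefl_apply, q_qreflMap q hu, one_mul]
      · rw [qrefl_apply, phi_qreflMap q φ (by rw [_root_.map_sub, hφz, hφz', sub_zero]) v, one_mul]
      · rw [qrefl_apply, qreflMap_send q hqz hqz' hP, one_smul]
    · push_neg at hP
      obtain ⟨a1, ha1φ, ha1⟩ := existA z hz hφz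
      obtain ⟨a2, ha2φ, ha2⟩ := existA z' hz' hφz'
      obtain ⟨a, haφ, haz, haz'⟩ :
          ∃ a, φ a = 0 ∧ polar (⇑q) z a ≠ 0 ∧ polar (⇑q) z' a ≠ 0 := by
        by_cases h1 : polar (⇑q) z' a1 ≠ 0
        · exact ⟨a1, ha1φ, ha1, h1⟩
        · by_cases h2 : polar (⇑q) z a2 ≠ 0
          · exact ⟨a2, ha2φ, h2, ha2⟩
          · push_neg at h1 h2
            exact ⟨a1 + a2, by rw [map_add, ha1φ, ha2φ, add_zero],
              by rw [polar_add_right, h2, add_zero]; exact ha1,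
              by rw [polar_add_right, h1, zero_add]; exact ha2⟩
      set y := a - (q a / polar (⇑q) z a) • z with hy
      have hφy : φ y = 0 := by
        rw [hy, _root_.map_sub, _root_.map_smul, haφ, hφz, smul_zero, sub_zero]
      have hqy : q y = 0 := by
        rw [hy, q_sub, QuadraticMap.map_smul, hqz, polar_smul_right,
          polar_comm (⇑q) a z, smul_eq_mul, smul_eq_mul,
          div_mul_cancel₀ _ haz]
        ring
      have hpzy : polar (⇑q) z y = polar (⇑q) z a := by
        rw [hy, polar_sub_right, polar_smul_right, polar_self, hqz]
        simp
      have hpz'y : polar (⇑q) z' y = polar (⇑q) z' a := by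
        rw [hy, polar_sub_right, polar_smul_right, polar_comm (⇑q) z' z, hP]
        simp
      have hzy : polar (⇑q) z y ≠ 0 := by rw [hpzy]; exact haz
      have hyz' : polar (⇑q) y z' ≠ 0 := by
        rw [polar_comm, hpz'y]; exact haz'
      have hu1 : q (z - y) ≠ 0 := q_sub_ne_zero q hqz hqy hzy
      have hu2 : q (y - z') ≠ 0 := q_sub_ne_zero q hqy hqz' hyz'
      refine ⟨(qrefl q (z - y) hu1).trans (qrefl q (y - z') hu2), 1, 1, 1,
        one_ne_zero, one_ne_zero, one_ne_zero, fun v => ?_, fun v => ?_, ?_⟩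
      · rw [LinearEquiv.trans_apply, qrefl_apply, qrefl_apply,
          q_qreflMap q hu2, q_qreflMap q hu1, one_mul]
      · rw [LinearEquiv.trans_apply, qrefl_apply, qrefl_apply,
          phi_qreflMap q φ (by rw [_root_.map_sub, hφy, hφz', sub_zero]),
          phi_qreflMap q φ (by rw [_root_.map_sub, hφz, hφy, sub_zero]), one_mul]
      · rw [LinearEquiv.trans_apply, qrefl_apply, qrefl_apply,
          qreflMap_send q hqz hqy hzy, qreflMap_send q hqy hqz' hyz', one_smul]
end

section
/- Let K be an algebraically closed field of characteristic 0, let a, b ≥ 2 be integers, and let u, v, u', v' ∈ K \ {0}. Set f = u·x₀^a y₀^b + v·x₁^a y₁^b and f' = u'·x₀^a y₀^b + v'·x₁^a y₁^b in K[x₀,x₁,y₀,y₁]. Then for all p₀, p₁ in the K-span of {x₀, x₁} and all q₀, q₁ in the K-span of {y₀, y₁}: p₀·∂f/∂x₀ + p₁·∂f/∂x₁ + q₀·∂f/∂y₀ + q₁·∂f/∂y₁ = 0 holds if and only if p₀·∂f'/∂x₀ + p₁·∂f'/∂x₁ + q₀·∂f'/∂y₀ + q₁·∂f'/∂y₁ =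 0 holds. -/
noncomputable section
open MvPolynomial

set_option maxHeartbeats 2000000 in
lemma key {K : Type*} [Field K] [CharZero K] (a' b' : ℕ) (u v : K) (hu : u ≠ 0) (hv : v ≠ 0)
    (α β γ δ ε ζ η θ : K)
    (F : MvPolynomial (Fin 4) K)
    (hF : F = C u * X 0 ^ (a'+2) * X 2 ^ (b'+2) + C v * X 1 ^ (a'+2) * X 3 ^ (b'+2)) :
    ((C α * X 0 + C β * X 1) * pderiv 0 F + (C γ * X 0 + C δ * X 1) * pderiv 1 F
      + (C ε * X 2 + C ζ * X 3) * pderiv 2 F + (C η * X 2 + C θ * X 3) * pderiv 3 F = 0)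
    ↔ (((a':K)+2)*α + ((b':K)+2)*ε = 0 ∧ β = 0 ∧ γ = 0
        ∧ ((a':K)+2)*δ + ((b':K)+2)*θ = 0 ∧ ζ = 0 ∧ η = 0) := by
  have ha : ((a':K)+2) ≠ 0 := by
    have : ((a':K)+2) = ((a'+2 : ℕ):K) := by push_cast; ring
    rw [this]; exact Nat.cast_ne_zero.mpr (by omega)
  have hb : ((b':K)+2) ≠ 0 := by
    have : ((b':K)+2) = ((b'+2 : ℕ):K) := by push_cast; ring
    rw [this]; exact Nat.cast_ne_zero.mpr (by omega)
  subst hF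
  have d0 : pderiv 0 (C u * X 0 ^ (a'+2) * X 2 ^ (b'+2) + C v * X 1 ^ (a'+2) * X 3 ^ (b'+2)
        : MvPolynomial (Fin 4) K)
      = C u * (((a':MvPolynomial (Fin 4) K)+2) * X 0 ^ (a'+1)) * X 2 ^ (b'+2) := by
    simp [pderiv_mul, Derivation.leibniz_pow, pderiv_X_self, pderiv_X_of_ne]; ring
  have d1 : pderiv 1 (C u * X 0 ^ (a'+2) * X 2 ^ (b'+2) + C v * X 1 ^ (a'+2) * X 3 ^ (b'+2)
        : MvPolynomial (Fin 4) K)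
      = C v * (((a':MvPolynomial (Fin 4) K)+2) * X 1 ^ (a'+1)) * X 3 ^ (b'+2) := by
    simp [pderiv_mul, Derivation.leibniz_pow, pderiv_X_self, pderiv_X_of_ne]; ring
  have d2 : pderiv 2 (C u * X 0 ^ (a'+2) * X 2 ^ (b'+2) + C v * X 1 ^ (a'+2) * X 3 ^ (b'+2)
        : MvPolynomial (Fin 4) K)
      = C u * X 0 ^ (a'+2) * (((b':MvPolynomial (Fin 4) K)+2) * X 2 ^ (b'+1)) := by
    simp [pderiv_mul, Derivation.leibniz_pow, pderiv_X_self, pderiv_X_of_ne]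
  have d3 : pderiv 3 (C u * X 0 ^ (a'+2) * X 2 ^ (b'+2) + C v * X 1 ^ (a'+2) * X 3 ^ (b'+2)
        : MvPolynomial (Fin 4) K)
      = C v * X 1 ^ (a'+2) * (((b':MvPolynomial (Fin 4) K)+2) * X 3 ^ (b'+1)) := by
    simp [pderiv_mul, Derivation.leibniz_pow, pderiv_X_self, pderiv_X_of_ne]
  rw [d0, d1, d2, d3]
  constructor
  · intro h
    have e1 := congrArg (eval ![1,0,1,0]) h
    have e2 := congrArg (eval ![0,1,0,1]) h
    have e3 := congrArg (eval ![1,1,1,0]) h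
    have e4 := congrArg (eval ![0,1,1,1]) h
    have e5 := congrArg (eval ![1,1,0,1]) h
    have e6 := congrArg (eval ![1,0,1,1]) h
    simp [Matrix.cons_val_succ] at e1 e2 e3 e4 e5 e6
    have h1 : ((a':K)+2)*α + ((b':K)+2)*ε = 0 := by
      have h' : u * (((a':K)+2)*α + ((b':K)+2)*ε) = 0 := by linear_combination e1
      exact (mul_eq_zero.mp h').resolve_left hu
    have h4 : ((a':K)+2)*δ + ((b':K)+2)*θ = 0 := by
      have h' : v * (((a':K)+2)*δ + ((b':K)+2)*θ) = 0 := by linear_combination e2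
      exact (mul_eq_zero.mp h').resolve_left hv
    have h2 : β = 0 := by
      have h' : β * (u * ((a':K)+2)) = 0 := by linear_combination e3 - e1
      exact (mul_eq_zero.mp h').resolve_right (mul_ne_zero hu ha)
    have h3 : γ = 0 := by
      have h' : γ * (v * ((a':K)+2)) = 0 := by linear_combination e5 - e2
      exact (mul_eq_zero.mp h').resolve_right (mul_ne_zero hv ha)
    have h5 : ζ = 0 := by
      have h' : ζ * (u * ((b':K)+2)) = 0 := by linear_combination e6 - e1
      exact (mul_eq_zero.mp h').resolve_right (mul_ne_zero hu hb)
    have h6 : η = 0 := by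
      have h' : η * (v * ((b':K)+2)) = 0 := by linear_combination e4 - e2
      exact (mul_eq_zero.mp h').resolve_right (mul_ne_zero hv hb)
    exact ⟨h1, h2, h3, h4, h5, h6⟩
  · rintro ⟨h1, h2, h3, h4, h5, h6⟩
    have H1 := congrArg (C : K → MvPolynomial (Fin 4) K) h1
    have H4 := congrArg (C : K → MvPolynomial (Fin 4) K) h4
    have H2 := congrArg (C : K → MvPolynomial (Fin 4) K) h2
    have H3 := congrArg (C : K → MvPolynomial (Fin 4) K) h3
    have H5 := congrArg (C : K → MvPolynomial (Fin 4) K) h5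
    have H6 := congrArg (C : K → MvPolynomial (Fin 4) K) h6
    simp only [map_add, map_mul, map_natCast, map_ofNat, map_zero] at H1 H4 H2 H3 H5 H6
    linear_combination (C u * X 0 ^ (a'+2) * X 2 ^ (b'+2)) * H1
      + (C v * X 1 ^ (a'+2) * X 3 ^ (b'+2)) * H4
      + (C u * (((a':MvPolynomial (Fin 4) K))+2) * X 1 * X 0 ^ (a'+1) * X 2 ^ (b'+2)) * H2
      + (C v * (((a':MvPolynomial (Fin 4) K))+2) * X 0 * X 1 ^ (a'+1) * X 3 ^ (b'+2)) * H3
      + (C u * (((b':MvPolynomial (Fin 4) K))+2) * X 3 * X 0 ^ (a'+2) * X 2 ^ (b'+1)) * H5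
      + (C v * (((b':MvPolynomial (Fin 4) K))+2) * X 2 * X 1 ^ (a'+2) * X 3 ^ (b'+1)) * H6

/-- For `f = u·x₀^a y₀^b + v·x₁^a y₁^b` and
`f' = u'·x₀^a y₀^b + v'·x₁^a y₁^b` with `u, v, u', v' ≠ 0` and `a, b ≥ 2`, a vector
field `p₀·∂/∂x₀ + p₁·∂/∂x₁ + q₀·∂/∂y₀ + q₁·∂/∂y₁` (with `p₀, p₁` linear in
`x₀, x₁` and `q₀, q₁` linear in `y₀, y₁`) annihilates `f` iff it annihilates `f'`.
Here `x₀ = X 0`, `x₁ = X 1`, `y₀ = X 2`, `y₁ = X 3`. -/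
theorem log_vector_fields_of_split_type_indep_of_coefficients
    {K : Type*} [Field K] [IsAlgClosed K] [CharZero K]
    (a b : ℕ) (ha : 2 ≤ a) (hb : 2 ≤ b)
    (u v u' v' : K) (hu : u ≠ 0) (hv : v ≠ 0) (hu' : u' ≠ 0) (hv' : v' ≠ 0)
    (f f' : MvPolynomial (Fin 4) K)
    (hf : f = C u * X 0 ^ a * X 2 ^ b + C v * X 1 ^ a * X 3 ^ b)
    (hf' : f' = C u' * X 0 ^ a * X 2 ^ b + C v' * X 1 ^ a * X 3 ^ b) :
    ∀ p₀ p₁ q₀ q₁ : MvPolynomial (Fin 4) K,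
      p₀ ∈ Submodule.span K {X 0, X 1} →
      p₁ ∈ Submodule.span K {X 0, X 1} →
      q₀ ∈ Submodule.span K {X 2, X 3} →
      q₁ ∈ Submodule.span K {X 2, X 3} →
        (p₀ * pderiv 0 f + p₁ * pderiv 1 f + q₀ * pderiv 2 f + q₁ * pderiv 3 f = 0
          ↔ p₀ * pderiv 0 f' + p₁ * pderiv 1 f' + q₀ * pderiv 2 f' + q₁ * pderiv 3 f'
              = 0) := by
  obtain ⟨a', rfl⟩ : ∃ a', a = a' + 2 := ⟨a - 2, by omega⟩
  obtain ⟨b', rfl⟩ : ∃ b', b = b' + 2 := ⟨b - 2, by omega⟩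
  intro p₀ p₁ q₀ q₁ hp₀ hp₁ hq₀ hq₁
  rw [Submodule.mem_span_pair] at hp₀ hp₁ hq₀ hq₁
  obtain ⟨α, β, rfl⟩ := hp₀
  obtain ⟨γ, δ, rfl⟩ := hp₁
  obtain ⟨ε, ζ, rfl⟩ := hq₀
  obtain ⟨η, θ, rfl⟩ := hq₁
  simp only [smul_eq_C_mul]
  rw [key a' b' u v hu hv α β γ δ ε ζ η θ f hf,
    key a' b' u' v' hu' hv' α β γ δ ε ζ η θ f' hf']
end
end

section
/- Let K be a field of characteristic 0, let a, b ≥ 1 be integers, and let w ∈ K[x₀,x₁,y₀,y₁] be bihomogeneous of bidegree (a,b). Suppose that ∂w/∂x₀ and ∂w/∂x₁ are linearly dependent over K, and that ∂w/∂y₀ and ∂w/∂y₁ are linearly dependent over K. Then there exist c ∈ K, a linear form l in the K-span of {x₀, x₁}, and a linear form m in the K-span of {y₀, y₁} such that w = c·l^a·m^b. -/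
noncomputable section
open MvPolynomial

variable {K : Type*} [Field K]

/-- `w` is bihomogeneous of bidegree `(a,b)` in the variables `x₀ = X 0`,
`x₁ = X 1`, `y₀ = X 2`, `y₁ = X 3`. -/
def IsBihomogeneous (a b : ℕ) (f : MvPolynomial (Fin 4) K) : Prop :=
  ∀ m ∈ f.support, m 0 + m 1 = a ∧ m 2 + m 3 = b

/-! ### Auxiliary lemmas -/

/-- Chain rule for `pderiv` applied to `aeval`. -/
lemma pderiv_aeval' {σ : Type*} [Fintype σ] [DecidableEq σ]
    (f : σ → MvPolynomial σ K) (i : σ) (p : MvPolynomial σ K) :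
    pderiv i (aeval f p) = ∑ j, aeval f (pderiv j p) * pderiv i (f j) := by
  induction p using MvPolynomial.induction_on with
  | C c => simp
  | add p q hp hq =>
      simp only [map_add, hp, hq, ← Finset.sum_add_distrib, add_mul]
  | mul_X p k hp =>
      rw [map_mul, aeval_X, pderiv_mul, hp, Finset.sum_mul]
      have step : ∀ j : σ, aeval f (pderiv j (p * X k)) * pderiv i (f j)
          = aeval f (pderiv j p) * pderiv i (f j) * f k
            + (if j = k then aeval f p * pderiv i (f k) else 0) := by
        intro j
        rw [pderiv_mul, map_add, map_mul, aeval_X, pderiv_X]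
        by_cases h : j = k
        · subst h; simp [Pi.single_apply]; ring
        · simp [Pi.single_apply, Ne.symm h, h]; ring
      rw [Finset.sum_congr rfl fun j _ => step j, Finset.sum_add_distrib,
        Finset.sum_ite_eq' Finset.univ k, if_pos (Finset.mem_univ k)]

lemma coeff_sub_single_pderiv {i : Fin 4} {m : Fin 4 →₀ ℕ} (hm : m i ≠ 0)
    (p : MvPolynomial (Fin 4) K) :
    coeff (m - Finsupp.single i 1) (pderiv i p) = (m i : K) * coeff m p := by
  classical
  have hle : Finsupp.single i 1 ≤ m := by rw [Finsupp.single_le_iff]; omega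
  induction p using MvPolynomial.induction_on' with
  | monomial s a =>
      rw [pderiv_monomial, coeff_monomial, coeff_monomial]
      by_cases hs : s = m
      · subst hs; simp [mul_comm]
      · rw [if_neg hs]
        by_cases hd : s - Finsupp.single i 1 = m - Finsupp.single i 1
        · rw [if_pos hd]
          by_cases hsi : s i = 0
          · simp [hsi]
          · exfalso
            have hles : Finsupp.single i 1 ≤ s := by rw [Finsupp.single_le_iff]; omega
            have : s = m := by
              have := congrArg (· + Finsupp.single i 1) hd
              simpa [tsub_add_cancel_of_le hles, tsub_add_cancel_of_le hle] using this
            exact hs this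
        · rw [if_neg hd, mul_zero]
  | add p q hp hq => rw [map_add, coeff_add, coeff_add, hp, hq]; ring

lemma coeff_eq_zero_of_pderiv_eq_zero [CharZero K] {i : Fin 4} {p : MvPolynomial (Fin 4) K}
    (h : pderiv i p = 0) {m : Fin 4 →₀ ℕ} (hm : m i ≠ 0) : coeff m p = 0 := by
  have key := coeff_sub_single_pderiv hm p
  rw [h, coeff_zero] at key
  exact (mul_eq_zero.mp key.symm).resolve_left (Nat.cast_ne_zero.mpr hm)

/-- The weight vector selecting the `x`-variables. -/
def wtx : Fin 4 → ℕ := ![1, 1, 0, 0]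

/-- The weight vector selecting the `y`-variables. -/
def wty : Fin 4 → ℕ := ![0, 0, 1, 1]

lemma weight_wtx (m : Fin 4 →₀ ℕ) : Finsupp.weight wtx m = m 0 + m 1 := by
  simp [Finsupp.weight_apply, Finsupp.sum_fintype, Fin.sum_univ_four, wtx]

lemma weight_wty (m : Fin 4 →₀ ℕ) : Finsupp.weight wty m = m 2 + m 3 := by
  simp [Finsupp.weight_apply, Finsupp.sum_fintype, Fin.sum_univ_four, wty]

lemma isBihomogeneous_iff {a b : ℕ} {p : MvPolynomial (Fin 4) K} :
    IsBihomogeneous a b p ↔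
      p.IsWeightedHomogeneous wtx a ∧ p.IsWeightedHomogeneous wty b := by
  constructor
  · intro h
    constructor <;> intro d hd <;>
      [rw [weight_wtx]; rw [weight_wty]] <;>
      [exact (h d (mem_support_iff.mpr hd)).1; exact (h d (mem_support_iff.mpr hd)).2]
  · rintro ⟨h1, h2⟩ m hm
    rw [mem_support_iff] at hm
    exact ⟨(weight_wtx m) ▸ h1 hm, (weight_wty m) ▸ h2 hm⟩

lemma wh_pow {w : Fin 4 → ℕ} {p : MvPolynomial (Fin 4) K} {n : ℕ}
    (h : p.IsWeightedHomogeneous w n) (k : ℕ) : (p ^ k).IsWeightedHomogeneous w (k * n) := by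
  induction k with
  | zero => simpa using isWeightedHomogeneous_one _ _
  | succ k ih =>
      rw [pow_succ, Nat.succ_mul]
      exact ih.mul h

lemma aeval_isWeightedHomogeneous (wgt : Fin 4 → ℕ) (f : Fin 4 → MvPolynomial (Fin 4) K)
    (hf : ∀ j, (f j).IsWeightedHomogeneous wgt (wgt j))
    {p : MvPolynomial (Fin 4) K} {n : ℕ} (hp : p.IsWeightedHomogeneous wgt n) :
    (aeval f p).IsWeightedHomogeneous wgt n := by
  classical
  have hsum : aeval f p
      = ∑ m ∈ p.support, (C (coeff m p) * m.prod fun i k => f i ^ k) := by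
    conv_lhs => rw [p.as_sum]
    rw [map_sum]
    refine Finset.sum_congr rfl fun m _ => ?_
    rw [aeval_monomial]
    rfl
  rw [hsum]
  apply IsWeightedHomogeneous.sum
  intro m hm
  have hw : Finsupp.weight wgt m = n := hp (mem_support_iff.mp hm)
  have h2 : (m.prod fun i k => f i ^ k).IsWeightedHomogeneous wgt (Finsupp.weight wgt m) := by
    rw [Finsupp.prod, Finsupp.weight_apply, Finsupp.sum]
    exact IsWeightedHomogeneous.prod _ _ _ fun i _ => by
      simpa [smul_eq_mul] using wh_pow (hf i) (m i)
  have := (isWeightedHomogeneous_C wgt (coeff m p)).mul h2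
  rw [zero_add, hw] at this
  exact this

lemma linform_hom (wgt : Fin 4 → ℕ) (d : ℕ) (i₀ i₁ : Fin 4) (h₀ : wgt i₀ = d) (h₁ : wgt i₁ = d)
    (s t : K) : IsWeightedHomogeneous wgt (s • X i₀ + t • X i₁ : MvPolynomial (Fin 4) K) d := by
  subst h₀
  have hX₀ : IsWeightedHomogeneous wgt (X i₀ : MvPolynomial (Fin 4) K) (wgt i₀) :=
    isWeightedHomogeneous_X _ _ _
  have hX₁ : IsWeightedHomogeneous wgt (X i₁ : MvPolynomial (Fin 4) K) (wgt i₀) := by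
    rw [← h₁]; exact isWeightedHomogeneous_X _ _ _
  rw [← mem_weightedHomogeneousSubmodule] at hX₀ hX₁ ⊢
  exact Submodule.add_mem _ (Submodule.smul_mem _ _ hX₀) (Submodule.smul_mem _ _ hX₁)

lemma half (α β : K) (h : ¬(α = 0 ∧ β = 0)) :
    ∃ t0 t1 u0 v0 u1 v1 : K,
      α * u0 + t0 * u1 = 1 ∧ α * v0 + t0 * v1 = 0 ∧
      β * u0 + t1 * u1 = 0 ∧ β * v0 + t1 * v1 = 1 := by
  by_cases hα : α = 0
  · have hβ : β ≠ 0 := fun hβ => h ⟨hα, hβ⟩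
    exact ⟨1, 0, 0, β⁻¹, 1, 0, by simp [hα], by simp [hα],
      by ring, by simp [mul_inv_cancel₀ hβ]⟩
  · exact ⟨0, 1, α⁻¹, 0, -(β * α⁻¹), 1, by simp [mul_inv_cancel₀ hα], by ring,
      by ring, by ring⟩

lemma key_lemma [CharZero K] (a b : ℕ) (w : MvPolynomial (Fin 4) K)
    (hwbi : IsBihomogeneous a b w)
    (s0 t0 s1 t1 s2 t2 s3 t3 u0 v0 u1 v1 u2 v2 u3 v3 : K)
    (e1 : s0 * u0 + t0 * u1 = 1) (e2 : s0 * v0 + t0 * v1 = 0)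
    (e3 : s1 * u0 + t1 * u1 = 0) (e4 : s1 * v0 + t1 * v1 = 1)
    (e5 : s2 * u2 + t2 * u3 = 1) (e6 : s2 * v2 + t2 * v3 = 0)
    (e7 : s3 * u2 + t3 * u3 = 0) (e8 : s3 * v2 + t3 * v3 = 1)
    (hX : s0 • pderiv (0 : Fin 4) w + s1 • pderiv (1 : Fin 4) w = 0)
    (hY : s2 • pderiv (2 : Fin 4) w + s3 • pderiv (3 : Fin 4) w = 0) :
    ∃ (c : K) (l m : MvPolynomial (Fin 4) K),
      l ∈ Submodule.span K ({X 0, X 1} : Set (MvPolynomial (Fin 4) K)) ∧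
      m ∈ Submodule.span K ({X 2, X 3} : Set (MvPolynomial (Fin 4) K)) ∧
      w = C c * l ^ a * m ^ b := by
  classical
  set f : Fin 4 → MvPolynomial (Fin 4) K :=
    ![s0 • X 0 + t0 • X 1, s1 • X 0 + t1 • X 1,
      s2 • X 2 + t2 • X 3, s3 • X 2 + t3 • X 3] with hf
  set g : Fin 4 → MvPolynomial (Fin 4) K :=
    ![u0 • X 0 + v0 • X 1, u1 • X 0 + v1 • X 1,
      u2 • X 2 + v2 • X 3, u3 • X 2 + v3 • X 3] with hg
  have hf0 : f 0 = s0 • X 0 + t0 • X 1 := rfl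
  have hf1 : f 1 = s1 • X 0 + t1 • X 1 := rfl
  have hf2 : f 2 = s2 • X 2 + t2 • X 3 := rfl
  have hf3 : f 3 = s3 • X 2 + t3 • X 3 := rfl
  have hg0 : g 0 = u0 • X 0 + v0 • X 1 := rfl
  have hg1 : g 1 = u1 • X 0 + v1 • X 1 := rfl
  have hg2 : g 2 = u2 • X 2 + v2 • X 3 := rfl
  have hg3 : g 3 = u3 • X 2 + v3 • X 3 := rfl
  have hgen : ∀ i : Fin 4, aeval g (f i) = X i := by
    have k0 : aeval g (f 0) = X 0 := by
      rw [hf0, map_add, map_smul, map_smul, aeval_X, aeval_X, hg0, hg1, smul_add, smul_add,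
        smul_smul, smul_smul, smul_smul, smul_smul, add_add_add_comm, ← add_smul, ← add_smul,
        e1, e2, one_smul, zero_smul, add_zero]
    have k1 : aeval g (f 1) = X 1 := by
      rw [hf1, map_add, map_smul, map_smul, aeval_X, aeval_X, hg0, hg1, smul_add, smul_add,
        smul_smul, smul_smul, smul_smul, smul_smul, add_add_add_comm, ← add_smul, ← add_smul,
        e3, e4, one_smul, zero_smul, zero_add]
    have k2 : aeval g (f 2) = X 2 := by
      rw [hf2, map_add, map_smul, map_smul, aeval_X, aeval_X, hg2, hg3, smul_add, smul_add,
        smul_smul, smul_smul, smul_smul, smul_smul, add_add_add_comm, ← add_smul, ← add_smul,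
        e5, e6, one_smul, zero_smul, add_zero]
    have k3 : aeval g (f 3) = X 3 := by
      rw [hf3, map_add, map_smul, map_smul, aeval_X, aeval_X, hg2, hg3, smul_add, smul_add,
        smul_smul, smul_smul, smul_smul, smul_smul, add_add_add_comm, ← add_smul, ← add_smul,
        e7, e8, one_smul, zero_smul, zero_add]
    intro i
    fin_cases i
    · exact k0
    · exact k1
    · exact k2
    · exact k3
  have hid : ∀ p : MvPolynomial (Fin 4) K, aeval g (aeval f p) = p := by
    have hcomp : (aeval g).comp (aeval f) = AlgHom.id K (MvPolynomial (Fin 4) K) := by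
      apply MvPolynomial.algHom_ext
      intro i
      simp only [AlgHom.comp_apply, aeval_X, AlgHom.id_apply]
      exact hgen i
    intro p
    exact congrArg (fun φ : _ →ₐ[K] _ => φ p) hcomp
  set W := aeval f w with hW
  have hdx : pderiv (0 : Fin 4) W = 0 := by
    rw [hW, pderiv_aeval', Fin.sum_univ_four]
    have h0 : pderiv (0 : Fin 4) (f 0) = C s0 := by
      simp [hf, smul_eq_C_mul, pderiv_C_mul]
    have h1 : pderiv (0 : Fin 4) (f 1) = C s1 := by
      simp [hf, smul_eq_C_mul, pderiv_C_mul]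
    have h2 : pderiv (0 : Fin 4) (f 2) = 0 := by
      simp [hf, smul_eq_C_mul, pderiv_C_mul]
    have h3 : pderiv (0 : Fin 4) (f 3) = 0 := by
      simp [hf, smul_eq_C_mul, pderiv_C_mul]
    rw [h0, h1, h2, h3, mul_zero, mul_zero, add_zero, add_zero]
    have : aeval f (pderiv (0 : Fin 4) w) * C s0 + aeval f (pderiv (1 : Fin 4) w) * C s1
        = aeval f (s0 • pderiv (0 : Fin 4) w + s1 • pderiv (1 : Fin 4) w) := by
      rw [map_add, map_smul, map_smul, smul_eq_C_mul, smul_eq_C_mul]; ring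
    rw [this, hX, map_zero]
  have hdy : pderiv (2 : Fin 4) W = 0 := by
    rw [hW, pderiv_aeval', Fin.sum_univ_four]
    have h0 : pderiv (2 : Fin 4) (f 0) = 0 := by
      simp [hf, smul_eq_C_mul, pderiv_C_mul]
    have h1 : pderiv (2 : Fin 4) (f 1) = 0 := by
      simp [hf, smul_eq_C_mul, pderiv_C_mul]
    have h2 : pderiv (2 : Fin 4) (f 2) = C s2 := by
      simp [hf, smul_eq_C_mul, pderiv_C_mul]
    have h3 : pderiv (2 : Fin 4) (f 3) = C s3 := by
      simp [hf, smul_eq_C_mul, pderiv_C_mul]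
    rw [h0, h1, h2, h3, mul_zero, mul_zero, zero_add, zero_add]
    have : aeval f (pderiv (2 : Fin 4) w) * C s2 + aeval f (pderiv (3 : Fin 4) w) * C s3
        = aeval f (s2 • pderiv (2 : Fin 4) w + s3 • pderiv (3 : Fin 4) w) := by
      rw [map_add, map_smul, map_smul, smul_eq_C_mul, smul_eq_C_mul]; ring
    rw [this, hY, map_zero]
  have hWbi : IsBihomogeneous a b W := by
    rw [isBihomogeneous_iff] at hwbi ⊢
    constructor
    · refine aeval_isWeightedHomogeneous wtx f (fun j => ?_) hwbi.1
      fin_cases j <;>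
        · simp only [hf, Matrix.cons_val_zero, Matrix.cons_val_one, Matrix.head_cons,
            Matrix.cons_val_two, Matrix.tail_cons, Matrix.cons_val_three]
          exact linform_hom _ _ _ _ (by rfl) (by rfl) _ _
    · refine aeval_isWeightedHomogeneous wty f (fun j => ?_) hwbi.2
      fin_cases j <;>
        · simp only [hf, Matrix.cons_val_zero, Matrix.cons_val_one, Matrix.head_cons,
            Matrix.cons_val_two, Matrix.tail_cons, Matrix.cons_val_three]
          exact linform_hom _ _ _ _ (by rfl) (by rfl) _ _
  set m₀ : Fin 4 →₀ ℕ := Finsupp.single 1 a + Finsupp.single 3 b with hm₀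
  have hm00 : m₀ 0 = 0 := by
    simp [hm₀, Finsupp.single_apply, show (1 : Fin 4) ≠ 0 by decide, show (3 : Fin 4) ≠ 0 by decide]
  have hm01 : m₀ 1 = a := by
    simp [hm₀, Finsupp.single_apply, show (3 : Fin 4) ≠ 1 by decide]
  have hm02 : m₀ 2 = 0 := by
    simp [hm₀, Finsupp.single_apply, show (1 : Fin 4) ≠ 2 by decide, show (3 : Fin 4) ≠ 2 by decide]
  have hm03 : m₀ 3 = b := by
    simp [hm₀, Finsupp.single_apply, show (1 : Fin 4) ≠ 3 by decide]
  have hsupp : ∀ n ∈ W.support, n = m₀ := by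
    intro n hn
    have h0 : n 0 = 0 := by
      by_contra h
      exact (mem_support_iff.mp hn) (coeff_eq_zero_of_pderiv_eq_zero hdx h)
    have h2 : n 2 = 0 := by
      by_contra h
      exact (mem_support_iff.mp hn) (coeff_eq_zero_of_pderiv_eq_zero hdy h)
    obtain ⟨hxa, hyb⟩ := hWbi n hn
    have hn1 : n 1 = a := by omega
    have hn3 : n 3 = b := by omega
    ext k
    fin_cases k
    · exact h0.trans hm00.symm
    · exact hn1.trans hm01.symm
    · exact h2.trans hm02.symm
    · exact hn3.trans hm03.symm
  set c := coeff m₀ W with hc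
  have hWmono : W = monomial m₀ c := by
    ext n
    rw [coeff_monomial]
    by_cases hn : m₀ = n
    · subst hn; rw [if_pos rfl]
    · rw [if_neg hn]
      by_contra h
      exact hn ((hsupp n (mem_support_iff.mpr h)).symm)
  have hmono : (monomial m₀ c : MvPolynomial (Fin 4) K) = C c * X 1 ^ a * X 3 ^ b := by
    rw [hm₀, monomial_add_single, C_mul_X_pow_eq_monomial]
  refine ⟨c, g 1, g 3, ?_, ?_, ?_⟩
  · have : g 1 = u1 • X 0 + v1 • X 1 := by simp [hg]
    rw [this]
    exact Submodule.add_mem _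
      (Submodule.smul_mem _ _ (Submodule.subset_span (Set.mem_insert _ _)))
      (Submodule.smul_mem _ _ (Submodule.subset_span (Set.mem_insert_of_mem _ rfl)))
  · have : g 3 = u3 • X 2 + v3 • X 3 := by simp [hg]
    rw [this]
    exact Submodule.add_mem _
      (Submodule.smul_mem _ _ (Submodule.subset_span (Set.mem_insert _ _)))
      (Submodule.smul_mem _ _ (Submodule.subset_span (Set.mem_insert_of_mem _ rfl)))
  · have : w = aeval g W := (hid w).symm
    rw [this, hWmono, hmono, map_mul, map_mul, map_pow, map_pow, aeval_X, aeval_X, aeval_C]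
    rw [algebraMap_eq]

/-- If `w` is bihomogeneous of bidegree `(a,b)` over a field of
characteristic zero, `∂w/∂x₀, ∂w/∂x₁` are linearly dependent over `K`, and
`∂w/∂y₀, ∂w/∂y₁` are linearly dependent over `K`, then `w = c·l^a·m^b` for some
scalar `c`, some linear form `l` in `x₀, x₁`, and some linear form `m` in
`y₀, y₁`. -/
theorem degenerate_jacobian_implies_monomial_form
    {K : Type*} [Field K] [CharZero K]
    (a b : ℕ) (ha : 1 ≤ a) (hb : 1 ≤ b)
    (w : MvPolynomial (Fin 4) K) (hwbi : IsBihomogeneous a b w)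
    (hx : ¬ LinearIndependent K ![pderiv (0 : Fin 4) w, pderiv (1 : Fin 4) w])
    (hy : ¬ LinearIndependent K ![pderiv (2 : Fin 4) w, pderiv (3 : Fin 4) w]) :
    ∃ (c : K) (l m : MvPolynomial (Fin 4) K),
      l ∈ Submodule.span K ({X 0, X 1} : Set (MvPolynomial (Fin 4) K)) ∧
      m ∈ Submodule.span K ({X 2, X 3} : Set (MvPolynomial (Fin 4) K)) ∧
      w = C c * l ^ a * m ^ b := by
  rw [LinearIndependent.pair_iff] at hx hy
  push_neg at hx hy
  obtain ⟨α, β, hxe, hxne⟩ := hx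
  obtain ⟨γ, δ, hye, hyne⟩ := hy
  obtain ⟨t0, t1, u0, v0, u1, v1, e1, e2, e3, e4⟩ := half α β (by tauto)
  obtain ⟨t2, t3, u2, v2, u3, v3, e5, e6, e7, e8⟩ := half γ δ (by tauto)
  exact key_lemma a b w hwbi α t0 β t1 γ t2 δ t3 u0 v0 u1 v1 u2 v2 u3 v3
    e1 e2 e3 e4 e5 e6 e7 e8 hxe hye
end
end
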